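/- Let A ∈ ℝ^{N×N} be a signed adjacency matrix that is structurally unbalanced, and assume the underlying graph of A is connected. Then the signed Laplacian L_s is positive definite; in particular all its eigenvalues are positive and rank(L_s) = N. -/

import Mathlib

/-!
Writing `s = sign a_ij`, the identity `|a| (x - sign a * y)² = |a| x² + |a| y² - 2 a x y` gives
`2 xᵀ L_s x = ∑ᵢⱼ |a_ij| (x_i - s_ij x_j)²`, so `L_s` is positive semidefinite, and a null vector
satisfies `x_i = s_ij x_j` along every edge. Then `|x|` is constant on the connected graph, so a
nonzero null vector rescales to a `±1` vector `d` with `d_i a_ij d_j = |a_ij| ≥ 0`, i.e. a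
balancing signature.
-/

open Matrix

theorem abs_mul_sub_sign_mul_sq (a x y : ℝ) :
    |a| * (x - SignType.sign a * y) ^ 2 = |a| * x ^ 2 + |a| * y ^ 2 - 2 * (a * x * y) := by
  linear_combination
    (SignType.sign a * y ^ 2 - 2 * x * y) * abs_mul_sign a + y ^ 2 * self_mul_sign a

theorem SimpleGraph.Reachable.eq_of_forall_adj {V α : Type*} {G : SimpleGraph V}
    {f : V → α} (hf : ∀ u v, G.Adj u v → f u = f v) {u v : V} (huv : G.Reachable u v) :
    f u = f v := by
  obtain ⟨w⟩ := huv
  induction w with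
  | nil => rfl
  | cons hadj _ ih => exact (hf _ _ hadj).trans ih

namespace Matrix

theorem PosDef.pos_of_mulVec_eq_smul {n : Type*} [Fintype n] {M : Matrix n n ℝ}
    (hM : M.PosDef) {μ : ℝ} {x : n → ℝ} (hx : x ≠ 0) (h : M *ᵥ x = μ • x) : 0 < μ := by
  have hpos := hM.dotProduct_mulVec_pos hx
  rw [h, dotProduct_smul, smul_eq_mul] at hpos
  exact pos_of_mul_pos_left hpos (dotProduct_star_self_nonneg x)

variable {ι : Type*}

section

variable (A : Matrix ι ι ℝ)

def underlyingGraph : SimpleGraph ι :=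
  SimpleGraph.fromRel fun i j => A i j ≠ 0

def IsStructurallyBalanced : Prop :=
  ∃ d : ι → ℝ, (∀ i, d i = 1 ∨ d i = -1) ∧ ∀ i j, 0 ≤ d i * A i j * d j

end

variable {A : Matrix ι ι ℝ}

theorem isStructurallyBalanced_of_eq_sign_mul (hconn : (underlyingGraph A).Connected)
    {x : ι → ℝ} (hx : x ≠ 0) (hsign : ∀ i j, A i j ≠ 0 → x i = SignType.sign (A i j) * x j) :
    IsStructurallyBalanced A := by
  have habs_adj : ∀ i j, A i j ≠ 0 → |x i| = |x j| := fun i j hij => by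
    rcases hij.lt_or_gt with h | h <;> simp [hsign i j hij, sign_neg, sign_pos, h]
  have habs : ∀ i j, |x i| = |x j| := fun i j =>
    (hconn.preconnected i j).eq_of_forall_adj fun u v huv => by
      rcases (SimpleGraph.fromRel_adj _ u v).mp huv |>.2 with h | h
      exacts [habs_adj u v h, (habs_adj v u h).symm]
  obtain ⟨i₀, hi₀⟩ := Function.ne_iff.mp hx
  set c := |x i₀|
  have hc : 0 < c := abs_pos.mpr hi₀
  refine ⟨fun i => x i / c, fun i => ?_, fun i j => ?_⟩
  · rcases abs_eq hc.le |>.mp (habs i i₀) with h | h <;> simp [h, hc.ne']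
  · by_cases hij : A i j = 0
    · simp [hij]
    have : x i / c * A i j * (x j / c) = |A i j| * (x j / c) ^ 2 := by
      rw [hsign i j hij, ← self_mul_sign]; ring
    rw [this]
    positivity

variable [Fintype ι] [DecidableEq ι]

def signedLaplacian (A : Matrix ι ι ℝ) : Matrix ι ι ℝ :=
  Matrix.of fun i j => if i = j then ∑ k, |A i k| else -A i j

theorem signedLaplacian_isHermitian (hA : A.IsSymm) : (signedLaplacian A).IsHermitian := by
  ext i j
  by_cases h : i = j
  · subst h; simp [signedLaplacian]
  · simp [signedLaplacian, h, Ne.symm h, hA.apply i j]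

theorem signedLaplacian_eq_diagonal_sub (hdiag : ∀ i, A i i = 0) :
    signedLaplacian A = diagonal (fun i => ∑ k, |A i k|) - A := by
  ext i j
  by_cases h : i = j
  · subst h; simp [signedLaplacian, hdiag]
  · simp [signedLaplacian, h]

theorem dotProduct_signedLaplacian_mulVec (hdiag : ∀ i, A i i = 0) (x : ι → ℝ) :
    x ⬝ᵥ signedLaplacian A *ᵥ x = ∑ i, ∑ j, (|A i j| * x i ^ 2 - A i j * x i * x j) := by
  simp only [dotProduct, signedLaplacian_eq_diagonal_sub hdiag, sub_mulVec, Pi.sub_apply,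
    mulVec_diagonal]
  simp only [mulVec, dotProduct, Finset.sum_mul, Finset.mul_sum, ← Finset.sum_sub_distrib]
  refine Finset.sum_congr rfl fun i _ => Finset.sum_congr rfl fun j _ => by ring

theorem two_mul_dotProduct_signedLaplacian_mulVec (hA : A.IsSymm) (hdiag : ∀ i, A i i = 0)
    (x : ι → ℝ) :
    2 * (x ⬝ᵥ signedLaplacian A *ᵥ x) =
      ∑ i, ∑ j, |A i j| * (x i - SignType.sign (A i j) * x j) ^ 2 := by
  have hQ := dotProduct_signedLaplacian_mulVec hdiag x
  rw [two_mul]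
  nth_rw 2 [hQ]
  rw [Finset.sum_comm, hQ, ← Finset.sum_add_distrib]
  refine Finset.sum_congr rfl fun i _ => ?_
  rw [← Finset.sum_add_distrib]
  refine Finset.sum_congr rfl fun j _ => ?_
  rw [abs_mul_sub_sign_mul_sq, hA.apply i j]
  ring

theorem dotProduct_signedLaplacian_mulVec_nonneg (hA : A.IsSymm) (hdiag : ∀ i, A i i = 0)
    (x : ι → ℝ) : 0 ≤ x ⬝ᵥ signedLaplacian A *ᵥ x := by
  have : 0 ≤ 2 * (x ⬝ᵥ signedLaplacian A *ᵥ x) := by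
    rw [two_mul_dotProduct_signedLaplacian_mulVec hA hdiag x]
    positivity
  linarith

theorem eq_sign_mul_of_dotProduct_signedLaplacian_mulVec_eq_zero (hA : A.IsSymm)
    (hdiag : ∀ i, A i i = 0) {x : ι → ℝ} (hx : x ⬝ᵥ signedLaplacian A *ᵥ x = 0) {i j : ι}
    (hij : A i j ≠ 0) : x i = SignType.sign (A i j) * x j := by
  have hsum := two_mul_dotProduct_signedLaplacian_mulVec hA hdiag x
  rw [hx, mul_zero, eq_comm, Finset.sum_eq_zero_iff_of_nonneg fun _ _ => by positivity] at hsum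
  have hrow := hsum i (Finset.mem_univ i)
  rw [Finset.sum_eq_zero_iff_of_nonneg fun _ _ => by positivity] at hrow
  have hterm := hrow j (Finset.mem_univ j)
  rw [mul_eq_zero, abs_eq_zero, sq_eq_zero_iff, sub_eq_zero] at hterm
  exact hterm.resolve_left hij

theorem signedLaplacian_posDef (hA : A.IsSymm) (hdiag : ∀ i, A i i = 0)
    (hunbal : ¬ IsStructurallyBalanced A) (hconn : (underlyingGraph A).Connected) :
    (signedLaplacian A).PosDef := by
  refine .of_dotProduct_mulVec_pos (signedLaplacian_isHermitian hA) fun x hx => ?_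
  rw [star_trivial]
  refine (dotProduct_signedLaplacian_mulVec_nonneg hA hdiag x).lt_of_ne' fun hnull => hunbal ?_
  exact isStructurallyBalanced_of_eq_sign_mul hconn hx fun i j =>
    eq_sign_mul_of_dotProduct_signedLaplacian_mulVec_eq_zero hA hdiag hnull

end Matrix

theorem signed_laplacian_SUB_posdef
    (N : ℕ) (A : Matrix (Fin N) (Fin N) ℝ)
    (hsym : A.IsSymm) (hdiag : ∀ i, A i i = 0)
    (hunbal : ¬ ∃ d : Fin N → ℝ, (∀ i, d i = 1 ∨ d i = -1) ∧ ∀ i j, 0 ≤ d i * A i j * d j)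
    (hconn : (SimpleGraph.fromRel (fun i j : Fin N => A i j ≠ 0)).Connected)
    (L : Matrix (Fin N) (Fin N) ℝ)
    (hL : ∀ i j, L i j = if i = j then ∑ k, |A i k| else -A i j) :
    L.PosDef ∧
    (∀ (μ : ℝ) (x : Fin N → ℝ), x ≠ 0 → L *ᵥ x = μ • x → 0 < μ) ∧
    L.rank = N := by
  obtain rfl : L = signedLaplacian A := Matrix.ext hL
  have hpd := signedLaplacian_posDef hsym hdiag hunbal hconn
  refine ⟨hpd, fun μ x hx hμ => hpd.pos_of_mulVec_eq_smul hx hμ, ?_⟩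
  rw [rank_of_isUnit _ hpd.isUnit, Fintype.card_fin]
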